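/- Let g ≥ 3 and let 𝔭̄ = 𝕃(H)/(θ) be the quotient of the free Lie algebra on H = ℚ^{2g} by the Lie ideal generated by θ, a graded ℚ-Lie algebra with H in degree 1. Then there exist derivations d₁ and d₂ of 𝔭̄ of degree 2 (i.e., mapping the degree-n component into the degree-(n+2) component for every n), neither of which is an inner derivation, such that the commutator [d₁,d₂] = d₁∘d₂ − d₂∘d₁ is a nonzero inner derivation; more precisely, [d₁,d₂] = ad(x) for some nonzero element x in the degree-4 component of 𝔭̄. -/

import Mathlib

set_option linter.unusedSectionVars false
set_option linter.unnecessarySeqFocus false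


/-!
Setup: the free Lie algebra `𝕃(H)` over `ℚ` on the symplectic basis of `H = ℚ^{2g}`,
its grading, the element `θ = Σᵢ [aᵢ,bᵢ]`, and the graded quotient Lie algebra
`𝔭̄ = 𝕃(H)/(θ)`.
-/

noncomputable section

namespace FreeLie

/-- Index set for the basis `a_1,…,a_g` (left) and `b_1,…,b_g` (right) of `H`. -/
abbrev Gen (g : ℕ) := Fin g ⊕ Fin g

/-- The free Lie algebra `𝕃(H)` over `ℚ` on (the basis of) `H = ℚ^{2g}`. -/
abbrev FL (g : ℕ) := FreeLieAlgebra ℚ (Gen g)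

/-- The degree-2 element `θ = Σᵢ [aᵢ,bᵢ]` corresponding to the symplectic form. -/
def thetaL (g : ℕ) : FL g :=
  ∑ i : Fin g, ⁅FreeLieAlgebra.of ℚ (Sum.inl i : Gen g), FreeLieAlgebra.of ℚ (Sum.inr i)⁆

/-- The Lie ideal `(θ)` generated by `θ`. -/
def thetaIdeal (g : ℕ) : LieIdeal ℚ (FL g) :=
  LieSubmodule.lieSpan ℚ (FL g) {thetaL g}

/-- The graded Lie algebra `𝔭̄ = 𝕃(H)/(θ)`. -/
abbrev LQ (g : ℕ) := FL g ⧸ thetaIdeal g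

/-- The degree-`n` graded component of the free Lie algebra `𝕃(H)`
(`H` sits in degree 1; degree `n+1` is spanned by brackets of generators with
degree-`n` elements). -/
def flDeg (g : ℕ) : ℕ → Submodule ℚ (FL g)
  | 0 => ⊥
  | 1 => Submodule.span ℚ (Set.range (FreeLieAlgebra.of ℚ (X := Gen g)))
  | (n + 2) => Submodule.span ℚ
      {z | ∃ x ∈ Submodule.span ℚ (Set.range (FreeLieAlgebra.of ℚ (X := Gen g))),
           ∃ y ∈ flDeg g (n + 1), z = ⁅x, y⁆}

/-- The degree-`n` graded component of `𝔭̄ = 𝕃(H)/(θ)`: the image of the degree-`n`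
component of `𝕃(H)` under the quotient map. -/
def lqDeg (g : ℕ) (n : ℕ) : Submodule ℚ (LQ g) :=
  (flDeg g n).map (LieSubmodule.Quotient.mk' (thetaIdeal g)).toLinearMap

end FreeLie

open FreeLie

attribute [local instance 100] LieRing.ofAssociativeRing

/-! ### Square-zero extension Lie algebra structure on `K × K` -/

section SqZ

variable {K : Type*} [LieRing K] [LieAlgebra ℚ K]

instance sqzBracket : Bracket (K × K) (K × K) :=
  ⟨fun x y => (⁅x.1, y.1⁆, ⁅x.1, y.2⁆ + ⁅x.2, y.1⁆)⟩

lemma sqz_bracket_def (x y : K × K) :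
    ⁅x, y⁆ = (⁅x.1, y.1⁆, ⁅x.1, y.2⁆ + ⁅x.2, y.1⁆) := rfl

instance sqzLieRing : LieRing (K × K) where
  add_lie x y z := by
    refine Prod.ext ?_ ?_ <;> simp [sqz_bracket_def, add_lie] <;> abel
  lie_add x y z := by
    refine Prod.ext ?_ ?_ <;> simp [sqz_bracket_def, lie_add] <;> abel
  lie_self x := by
    refine Prod.ext ?_ ?_ <;> simp [sqz_bracket_def]
    rw [add_eq_zero_iff_eq_neg, ← lie_skew]
  leibniz_lie x y z := by
    refine Prod.ext ?_ ?_
    · simp only [sqz_bracket_def, Prod.fst_add]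
      exact leibniz_lie _ _ _
    · simp only [sqz_bracket_def, Prod.snd_add, Prod.fst_add, lie_add, add_lie]
      rw [leibniz_lie x.1 y.1 z.2, leibniz_lie x.1 y.2 z.1, leibniz_lie x.2 y.1 z.1]
      abel

instance sqzLieAlgebra : LieAlgebra ℚ (K × K) where
  lie_smul t x y := by
    refine Prod.ext ?_ ?_ <;> simp [sqz_bracket_def, lie_smul, smul_add]

/-- First projection as a Lie algebra hom. -/
def sqzFst : (K × K) →ₗ⁅ℚ⁆ K :=
  { LinearMap.fst ℚ K K with map_lie' := rfl }

@[simp] lemma sqzFst_apply (x : K × K) : sqzFst x = x.1 := rfl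

end SqZ

/-! ### Auxiliary constructions -/

namespace Stmt10

open FreeLieAlgebra

variable (g : ℕ)

/-- `a`-generators. -/
def aG (i : Fin g) : FL g := of ℚ (Sum.inl i)

/-- `b`-generators. -/
def bG (i : Fin g) : FL g := of ℚ (Sum.inr i)

/-- Quotient map as a Lie algebra hom. -/
def piH : FL g →ₗ⁅ℚ⁆ LQ g :=
  { (LieSubmodule.Quotient.mk' (thetaIdeal g)).toLinearMap with
    map_lie' := by
      intro x y
      exact (LieSubmodule.Quotient.mk_bracket (thetaIdeal g) x y) }

lemma piH_surjective : Function.Surjective (piH g) :=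
  Submodule.Quotient.mk_surjective _

lemma piH_theta : piH g (thetaL g) = 0 := by
  have h : thetaL g ∈ thetaIdeal g :=
    LieSubmodule.subset_lieSpan rfl
  exact (LieSubmodule.Quotient.mk_eq_zero' (N := thetaIdeal g)).mpr h

lemma mem_lqDeg_of_mem {n : ℕ} {u : FL g} (hu : u ∈ flDeg g n) :
    piH g u ∈ lqDeg g n :=
  Submodule.mem_map_of_mem hu

lemma lqDeg_mem_iff {n : ℕ} {v : LQ g} :
    v ∈ lqDeg g n ↔ ∃ u ∈ flDeg g n, piH g u = v := by
  constructor
  · rintro ⟨u, hu, rfl⟩; exact ⟨u, hu, rfl⟩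
  · rintro ⟨u, hu, rfl⟩; exact ⟨u, hu, rfl⟩

/-- Bracketing on the right, as a linear map. -/
def brkt (v : FL g) : FL g →ₗ[ℚ] FL g :=
  (LieAlgebra.ad ℚ (FL g)).toLinearMap.flip v

@[simp] lemma brkt_apply (v u : FL g) : brkt g v u = ⁅u, v⁆ := rfl

lemma flDeg_one : flDeg g 1
    = Submodule.span ℚ (Set.range (FreeLieAlgebra.of ℚ (X := Gen g))) := rfl

lemma flDeg_two_add (n : ℕ) : flDeg g (n + 2) = Submodule.span ℚ
      {z | ∃ x ∈ Submodule.span ℚ (Set.range (FreeLieAlgebra.of ℚ (X := Gen g))),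
           ∃ y ∈ flDeg g (n + 1), z = ⁅x, y⁆} := rfl

lemma of_mem_flDeg_one (c : Gen g) : of ℚ c ∈ flDeg g 1 :=
  Submodule.subset_span ⟨c, rfl⟩

lemma flDeg_bracket :
    ∀ (m n : ℕ) (u : FL g), u ∈ flDeg g m → ∀ v ∈ flDeg g n,
      ⁅u, v⁆ ∈ flDeg g (m + n) := by
  intro m
  induction m using Nat.strong_induction_on with
  | _ m ih =>
    rcases m with _ | (_ | k)
    · intro n u hu v hv
      have : u = 0 := by simpa [flDeg] using hu
      subst this
      simp only [zero_lie]
      exact Submodule.zero_mem _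
    · -- m = 1
      intro n u hu v hv
      rw [flDeg_one] at hu
      have : Submodule.span ℚ (Set.range (FreeLieAlgebra.of ℚ (X := Gen g)))
          ≤ Submodule.comap (brkt g v) (flDeg g (1 + n)) := by
        rw [Submodule.span_le]
        rintro _ ⟨c, rfl⟩
        simp only [SetLike.mem_coe, Submodule.mem_comap, brkt_apply]
        rcases n with _ | k
        · have : v = 0 := by simpa [flDeg] using hv
          subst this
          simp only [lie_zero]
          exact Submodule.zero_mem _
        · have h1k : (1 + (k+1)) = k + 2 := by omega
          rw [h1k, flDeg_two_add]
          exact Submodule.subset_span ⟨of ℚ c, Submodule.subset_span ⟨c, rfl⟩, v, hv, rfl⟩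
      simpa using this hu
    · -- m = k + 2
      intro n u hu v hv
      rw [flDeg_two_add] at hu
      have : Submodule.span ℚ
          {z | ∃ x ∈ Submodule.span ℚ (Set.range (FreeLieAlgebra.of ℚ (X := Gen g))),
               ∃ y ∈ flDeg g (k + 1), z = ⁅x, y⁆}
          ≤ Submodule.comap (brkt g v) (flDeg g (k + 2 + n)) := by
        rw [Submodule.span_le]
        rintro _ ⟨x, hx, y, hy, rfl⟩
        simp only [SetLike.mem_coe, Submodule.mem_comap, brkt_apply]
        rw [lie_lie]
        have hx1 : x ∈ flDeg g 1 := by rw [flDeg_one]; exact hx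
        have hyv : ⁅y, v⁆ ∈ flDeg g (k + 1 + n) :=
          ih (k+1) (by omega) n y hy v hv
        have t1 : ⁅x, ⁅y, v⁆⁆ ∈ flDeg g (1 + (k + 1 + n)) :=
          ih 1 (by omega) (k+1+n) x hx1 _ hyv
        have hxv : ⁅x, v⁆ ∈ flDeg g (1 + n) :=
          ih 1 (by omega) n x hx1 v hv
        have t2 : ⁅y, ⁅x, v⁆⁆ ∈ flDeg g (k + 1 + (1 + n)) :=
          ih (k+1) (by omega) (1+n) y hy _ hxv
        have e1 : 1 + (k + 1 + n) = k + 2 + n := by omega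
        have e2 : k + 1 + (1 + n) = k + 2 + n := by omega
        rw [e1] at t1; rw [e2] at t2
        exact Submodule.sub_mem _ t1 t2
      simpa using this hu

end Stmt10
namespace Stmt10

open FreeLieAlgebra

variable (g : ℕ) (hg : 3 ≤ g)

def i0 : Fin g := ⟨0, by omega⟩
def i1 : Fin g := ⟨1, by omega⟩
def i2 : Fin g := ⟨2, by omega⟩

def a0 : FL g := aG g (i0 g hg)
def a1 : FL g := aG g (i1 g hg)
def a2 : FL g := aG g (i2 g hg)

/-- Values of the derivation `d₁` on the `b`-generators. -/
def vBr (j : Fin g) : FL g :=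
  if j = i0 g hg then
    ⁅a1 g hg, ⁅a2 g hg, a0 g hg⁆⁆ - ⁅a2 g hg, ⁅a0 g hg, a1 g hg⁆⁆
  else if j = i1 g hg then ⁅⁅a2 g hg, a0 g hg⁆, a0 g hg⁆
  else if j = i2 g hg then ⁅a0 g hg, ⁅a0 g hg, a1 g hg⁆⁆
  else 0

/-- Values of the derivation `d₁` on the generators. -/
def vB : Gen g → FL g := Sum.elim (fun _ => 0) (vBr g hg)

lemma i0_ne_i1 : i0 g hg ≠ i1 g hg := by simp [i0, i1, Fin.ext_iff]
lemma i0_ne_i2 : i0 g hg ≠ i2 g hg := by simp [i0, i2, Fin.ext_iff]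
lemma i1_ne_i2 : i1 g hg ≠ i2 g hg := by simp [i1, i2, Fin.ext_iff]

set_option maxRecDepth 4000 in
lemma vB_inl (i : Fin g) : vB g hg (Sum.inl i) = 0 := rfl

lemma vB_inr (j : Fin g) : vB g hg (Sum.inr j) = vBr g hg j := rfl

set_option maxRecDepth 4000 in
lemma vB_i0 : vB g hg (Sum.inr (i0 g hg)) =
    ⁅a1 g hg, ⁅a2 g hg, a0 g hg⁆⁆ - ⁅a2 g hg, ⁅a0 g hg, a1 g hg⁆⁆ := by
  rw [vB_inr, vBr, if_pos rfl]

set_option maxRecDepth 4000 in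
lemma vB_i1 : vB g hg (Sum.inr (i1 g hg)) = ⁅⁅a2 g hg, a0 g hg⁆, a0 g hg⁆ := by
  rw [vB_inr, vBr, if_neg (i0_ne_i1 g hg).symm, if_pos rfl]

set_option maxRecDepth 4000 in
lemma vB_i2 : vB g hg (Sum.inr (i2 g hg)) = ⁅a0 g hg, ⁅a0 g hg, a1 g hg⁆⁆ := by
  rw [vB_inr, vBr, if_neg (i0_ne_i2 g hg).symm, if_neg (i1_ne_i2 g hg).symm, if_pos rfl]

set_option maxRecDepth 4000 in
lemma vB_other (j : Fin g) (h0 : j ≠ i0 g hg) (h1 : j ≠ i1 g hg) (h2 : j ≠ i2 g hg) :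
    vB g hg (Sum.inr j) = 0 := by
  rw [vB_inr, vBr, if_neg h0, if_neg h1, if_neg h2]

lemma vB_mem_flDeg_three (c : Gen g) : vB g hg c ∈ flDeg g 3 := by
  have h1 : ∀ i : Fin g, aG g i ∈ flDeg g 1 := fun i => of_mem_flDeg_one g _
  have h2 : ∀ i j : Fin g, ⁅aG g i, aG g j⁆ ∈ flDeg g 2 :=
    fun i j => flDeg_bracket g 1 1 _ (h1 i) _ (h1 j)
  have h3 : ∀ (i : Fin g) (w : FL g), w ∈ flDeg g 2 → ⁅aG g i, w⁆ ∈ flDeg g 3 :=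
    fun i w hw => flDeg_bracket g 1 2 _ (h1 i) _ hw
  have h3' : ∀ (w : FL g) (i : Fin g), w ∈ flDeg g 2 → ⁅w, aG g i⁆ ∈ flDeg g 3 :=
    fun w i hw => flDeg_bracket g 2 1 _ hw _ (h1 i)
  rcases c with i | j
  · rw [vB_inl]; exact Submodule.zero_mem _
  · by_cases e0 : j = i0 g hg
    · subst e0; rw [vB_i0]
      exact Submodule.sub_mem _ (h3 _ _ (h2 _ _)) (h3 _ _ (h2 _ _))
    · by_cases e1 : j = i1 g hg
      · subst e1; rw [vB_i1]; exact h3' _ _ (h2 _ _)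
      · by_cases e2 : j = i2 g hg
        · subst e2; rw [vB_i2]; exact h3 _ _ (h2 _ _)
        · rw [vB_other g hg j e0 e1 e2]; exact Submodule.zero_mem _

lemma sum_three {M : Type*} [AddCommMonoid M] (t : Fin g → M)
    (h : ∀ i, i ≠ i0 g hg → i ≠ i1 g hg → i ≠ i2 g hg → t i = 0) :
    ∑ i, t i = t (i0 g hg) + t (i1 g hg) + t (i2 g hg) := by
  classical
  rw [← Finset.sum_subset (Finset.subset_univ ({i0 g hg, i1 g hg, i2 g hg} : Finset (Fin g)))
      (fun x _ hx => ?_)]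
  · rw [Finset.sum_insert (by simp [i0_ne_i1 g hg, i0_ne_i2 g hg]),
        Finset.sum_insert (by simp [i1_ne_i2 g hg]), Finset.sum_singleton, add_assoc]
  · simp only [Finset.mem_insert, Finset.mem_singleton] at hx
    push_neg at hx
    exact h x hx.1 hx.2.1 hx.2.2

/-- The key Jacobi identity making `d₁ θ = 0`. -/
lemma key_identity :
    ⁅a0 g hg, vB g hg (Sum.inr (i0 g hg))⁆ + ⁅a1 g hg, vB g hg (Sum.inr (i1 g hg))⁆
      + ⁅a2 g hg, vB g hg (Sum.inr (i2 g hg))⁆ = 0 := by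
  rw [vB_i0, vB_i1, vB_i2]
  set A0 := a0 g hg
  set A1 := a1 g hg
  set A2 := a2 g hg
  set r := ⁅A2, A0⁆ with hr
  set s := ⁅A0, A1⁆ with hs
  have h1 : ⁅A0, ⁅A1, r⁆⁆ + ⁅A1, ⁅r, A0⁆⁆ = -⁅r, s⁆ := by
    have := lie_jacobi A0 A1 r
    rw [← hs] at this
    exact add_eq_zero_iff_eq_neg.mp this
  have h2 : ⁅A2, ⁅A0, s⁆⁆ = ⁅r, s⁆ + ⁅A0, ⁅A2, s⁆⁆ := by
    rw [leibniz_lie A2 A0 s, ← hr]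
  rw [lie_sub, h2]
  rw [show ⁅A0, ⁅A1, r⁆⁆ - ⁅A0, ⁅A2, s⁆⁆ + ⁅A1, ⁅r, A0⁆⁆ + (⁅r, s⁆ + ⁅A0, ⁅A2, s⁆⁆)
      = (⁅A0, ⁅A1, r⁆⁆ + ⁅A1, ⁅r, A0⁆⁆) + ⁅r, s⁆ from by abel, h1]
  abel

/-- The lift of `d₁` to the free Lie algebra, as a hom into the square-zero extension. -/
def phiF : FL g →ₗ⁅ℚ⁆ (LQ g × LQ g) :=
  FreeLieAlgebra.lift ℚ (fun c => ((piH g (of ℚ c), piH g (vB g hg c)) : LQ g × LQ g))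

lemma phiF_of (c : Gen g) :
    phiF g hg (of ℚ c) = (piH g (of ℚ c), piH g (vB g hg c)) := by
  simp [phiF]

lemma phiF_fst (u : FL g) : (phiF g hg u).1 = piH g u := by
  have : (sqzFst (K := LQ g)).comp (phiF g hg) = piH g := by
    apply FreeLieAlgebra.hom_ext
    intro c
    simp [phiF_of]
  calc (phiF g hg u).1 = ((sqzFst (K := LQ g)).comp (phiF g hg)) u := rfl
    _ = piH g u := by rw [this]

/-- The underlying derivation `FL g → LQ g`. -/
def D : FL g →ₗ[ℚ] LQ g :=
  (LinearMap.snd ℚ (LQ g) (LQ g)).comp (phiF g hg).toLinearMap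

lemma D_apply (u : FL g) : D g hg u = (phiF g hg u).2 := rfl

lemma D_of (c : Gen g) : D g hg (of ℚ c) = piH g (vB g hg c) := by
  rw [D_apply, phiF_of]

lemma D_bracket (u v : FL g) :
    D g hg ⁅u, v⁆ = ⁅piH g u, D g hg v⁆ + ⁅D g hg u, piH g v⁆ := by
  rw [D_apply, LieHom.map_lie, sqz_bracket_def]
  simp only [D_apply, phiF_fst]

lemma lhom_sum {A : Type*} [LieRing A] [LieAlgebra ℚ A] (F : FL g →ₗ⁅ℚ⁆ A)
    (f : Fin g → FL g) : F (∑ i, f i) = ∑ i, F (f i) := by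
  exact map_sum (F.toLinearMap) f Finset.univ

lemma phiF_theta : phiF g hg (thetaL g) = 0 := by
  have hterm : ∀ i : Fin g,
      phiF g hg ⁅of ℚ (Sum.inl i : Gen g), of ℚ (Sum.inr i)⁆
        = (piH g ⁅aG g i, bG g i⁆, piH g ⁅aG g i, vB g hg (Sum.inr i)⁆) := by
    intro i
    rw [LieHom.map_lie, phiF_of, phiF_of, sqz_bracket_def]
    simp only [vB_inl, map_zero, zero_lie, add_zero]
    refine Prod.ext ?_ ?_ <;> simp [aG, bG, LieHom.map_lie]
  rw [thetaL, lhom_sum]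
  simp only [hterm]
  refine Prod.ext ?_ ?_
  · rw [Prod.fst_sum]
    simp only
    rw [← lhom_sum]
    have : (∑ i : Fin g, ⁅aG g i, bG g i⁆) = thetaL g := rfl
    rw [this, piH_theta]
    simp
  · rw [Prod.snd_sum]
    simp only
    rw [← lhom_sum]
    have hz : (∑ i : Fin g, ⁅aG g i, vB g hg (Sum.inr i)⁆) = 0 := by
      rw [sum_three g hg (fun i => ⁅aG g i, vB g hg (Sum.inr i)⁆)
        (fun i h0 h1 h2 => by simp [vB_other g hg i h0 h1 h2])]
      exact key_identity g hg
    rw [hz, show (piH g) (0 : FL g) = 0 from (piH g).toLinearMap.map_zero]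
    simp

end Stmt10
namespace Stmt10

open FreeLieAlgebra

variable (g : ℕ) (hg : 3 ≤ g)

/-! ### The detector homomorphism into 2×2 matrices -/

def Me : Matrix (Fin 2) (Fin 2) ℚ := !![0, 1; 0, 0]
def Mf : Matrix (Fin 2) (Fin 2) ℚ := !![0, 0; 1, 0]
def Mh : Matrix (Fin 2) (Fin 2) ℚ := !![1, 0; 0, -1]

def fMat : Gen g → Matrix (Fin 2) (Fin 2) ℚ
  | Sum.inl i => if (i : ℕ) = 0 then Me else if (i : ℕ) = 1 then Mf
      else if (i : ℕ) = 2 then Mh else 0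
  | Sum.inr _ => 0

def psiF : FL g →ₗ⁅ℚ⁆ Matrix (Fin 2) (Fin 2) ℚ :=
  FreeLieAlgebra.lift ℚ (fMat g)

lemma psiF_of (c : Gen g) : psiF g (of ℚ c) = fMat g c := by simp [psiF]

lemma psiF_a0 : psiF g (a0 g hg) = Me := by
  rw [a0, aG, psiF_of]; rfl

lemma psiF_a1 : psiF g (a1 g hg) = Mf := by
  rw [a1, aG, psiF_of]; rfl

lemma psiF_a2 : psiF g (a2 g hg) = Mh := by
  rw [a2, aG, psiF_of]; rfl

lemma psiF_b (j : Fin g) : psiF g (bG g j) = 0 := by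
  rw [bG, psiF_of]; rfl

lemma psiF_theta : psiF g (thetaL g) = 0 := by
  rw [thetaL, lhom_sum]
  refine Finset.sum_eq_zero fun i _ => ?_
  rw [LieHom.map_lie]
  have : psiF g (of ℚ (Sum.inr i : Gen g)) = 0 := psiF_b g i
  rw [this, lie_zero]

/-- Any Lie hom killing `θ` kills the whole ideal. -/
lemma ideal_apply_eq_zero {A : Type*} [LieRing A] [LieAlgebra ℚ A]
    (F : FL g →ₗ⁅ℚ⁆ A) (hF : F (thetaL g) = 0) {u : FL g} (hu : u ∈ thetaIdeal g) :
    F u = 0 := by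
  have hle : thetaIdeal g ≤ F.ker := by
    rw [thetaIdeal, LieSubmodule.lieSpan_le]
    intro x hx
    rcases hx with rfl
    exact LieHom.mem_ker.mpr hF
  exact LieHom.mem_ker.mp (hle hu)

/-- The detector on the quotient. -/
def psiQ : LQ g →ₗ[ℚ] Matrix (Fin 2) (Fin 2) ℚ :=
  Submodule.liftQ (thetaIdeal g).toSubmodule (psiF g).toLinearMap
    (fun u hu => by
      have : psiF g u = 0 := ideal_apply_eq_zero g (psiF g) (psiF_theta g) hu
      simpa using this)

lemma psiQ_mk (u : FL g) : psiQ g (piH g u) = psiF g u := rfl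

lemma psiQ_bracket (x y : LQ g) : psiQ g ⁅x, y⁆ = ⁅psiQ g x, psiQ g y⁆ := by
  obtain ⟨u, rfl⟩ := piH_surjective g x
  obtain ⟨v, rfl⟩ := piH_surjective g y
  rw [← LieHom.map_lie, psiQ_mk, psiQ_mk, psiQ_mk, LieHom.map_lie]

/-! ### The derivation `d₁` on the quotient -/

def d1 : LQ g →ₗ[ℚ] LQ g :=
  Submodule.liftQ (thetaIdeal g).toSubmodule (D g hg)
    (fun u hu => by
      have h0 : phiF g hg u = 0 :=
        ideal_apply_eq_zero g (phiF g hg) (phiF_theta g hg) hu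
      have : D g hg u = 0 := by rw [D_apply, h0]; rfl
      simpa using this)

end Stmt10
namespace Stmt10

open FreeLieAlgebra

variable (g : ℕ) (hg : 3 ≤ g)

lemma lhom_sub {A : Type*} [LieRing A] [LieAlgebra ℚ A] (F : FL g →ₗ⁅ℚ⁆ A)
    (u v : FL g) : F (u - v) = F u - F v :=
  F.toLinearMap.map_sub u v

lemma d1_mk (u : FL g) : d1 g hg (piH g u) = D g hg u := rfl

lemma d1_leibniz (x y : LQ g) :
    d1 g hg ⁅x, y⁆ = ⁅d1 g hg x, y⁆ + ⁅x, d1 g hg y⁆ := by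
  obtain ⟨u, rfl⟩ := piH_surjective g x
  obtain ⟨v, rfl⟩ := piH_surjective g y
  rw [← LieHom.map_lie, d1_mk, d1_mk, d1_mk, D_bracket, add_comm]

lemma D_grade : ∀ n : ℕ, ∀ u ∈ flDeg g n, D g hg u ∈ lqDeg g (n + 2) := by
  intro n
  induction n using Nat.strong_induction_on with
  | _ n ih =>
    rcases n with _ | (_ | k)
    · intro u hu
      have : u = 0 := by simpa [flDeg] using hu
      subst this
      rw [show D g hg 0 = 0 from (D g hg).map_zero]
      exact Submodule.zero_mem _
    · intro u hu
      rw [flDeg_one] at hu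
      have hle : Submodule.span ℚ (Set.range (FreeLieAlgebra.of ℚ (X := Gen g)))
          ≤ Submodule.comap (D g hg) (lqDeg g 3) := by
        rw [Submodule.span_le]
        rintro _ ⟨c, rfl⟩
        simp only [SetLike.mem_coe, Submodule.mem_comap]
        rw [D_of]
        exact mem_lqDeg_of_mem g (vB_mem_flDeg_three g hg c)
      simpa using hle hu
    · intro u hu
      rw [flDeg_two_add] at hu
      have hle : Submodule.span ℚ
          {z | ∃ x ∈ Submodule.span ℚ (Set.range (FreeLieAlgebra.of ℚ (X := Gen g))),
               ∃ y ∈ flDeg g (k + 1), z = ⁅x, y⁆}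
          ≤ Submodule.comap (D g hg) (lqDeg g (k + 4)) := by
        rw [Submodule.span_le]
        rintro _ ⟨x, hx, y, hy, rfl⟩
        simp only [SetLike.mem_coe, Submodule.mem_comap]
        rw [D_bracket]
        have hx1 : x ∈ flDeg g 1 := by rw [flDeg_one]; exact hx
        have hDy : D g hg y ∈ lqDeg g (k + 3) := by
          have := ih (k + 1) (by omega) y hy
          rwa [show k + 1 + 2 = k + 3 from by omega] at this
        obtain ⟨y', hy', hyeq⟩ := (lqDeg_mem_iff g).mp hDy
        have hDx : D g hg x ∈ lqDeg g 3 := ih 1 (by omega) x hx1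
        obtain ⟨x', hx', hxeq⟩ := (lqDeg_mem_iff g).mp hDx
        have t1 : ⁅piH g x, D g hg y⁆ ∈ lqDeg g (k + 4) := by
          rw [← hyeq, ← LieHom.map_lie]
          have h := flDeg_bracket g 1 (k + 3) x hx1 y' hy'
          rw [show 1 + (k + 3) = k + 4 from by omega] at h
          exact mem_lqDeg_of_mem g h
        have t2 : ⁅D g hg x, piH g y⁆ ∈ lqDeg g (k + 4) := by
          rw [← hxeq, ← LieHom.map_lie]
          have h := flDeg_bracket g 3 (k + 1) x' hx' y hy
          rw [show 3 + (k + 1) = k + 4 from by omega] at h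
          exact mem_lqDeg_of_mem g h
        exact Submodule.add_mem _ t1 t2
      have := hle hu
      simp only [Submodule.mem_comap] at this
      rwa [show k + 1 + 1 + 2 = k + 4 from by omega]

lemma d1_grade (n : ℕ) (v : LQ g) (hv : v ∈ lqDeg g n) :
    d1 g hg v ∈ lqDeg g (n + 2) := by
  obtain ⟨u, hu, rfl⟩ := (lqDeg_mem_iff g).mp hv
  rw [d1_mk]
  exact D_grade g hg n u hu

/-! ### Matrix non-vanishing facts -/

lemma M1_ne : (⁅Mf, ⁅Mh, Me⁆⁆ - ⁅Mh, ⁅Me, Mf⁆⁆ : Matrix (Fin 2) (Fin 2) ℚ) ≠ 0 := by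
  intro hM
  have h := congrFun (congrFun hM 0) 0
  simp [Me, Mf, Mh, Ring.lie_def, Matrix.sub_apply, Matrix.mul_apply,
    Fin.sum_univ_two] at h

lemma M2_ne : (⁅⁅Me, ⁅Me, Mf⁆⁆, Mf⁆ : Matrix (Fin 2) (Fin 2) ℚ) ≠ 0 := by
  intro hM
  have h := congrFun (congrFun hM 0) 0
  simp [Me, Mf, Mh, Ring.lie_def, Matrix.sub_apply, Matrix.mul_apply,
    Fin.sum_univ_two] at h
  norm_num at h

/-! ### `d₁` is not inner -/

lemma d1_not_inner : ¬ ∃ z : LQ g, ∀ y : LQ g, d1 g hg y = ⁅z, y⁆ := by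
  rintro ⟨z, hz⟩
  have h := hz (piH g (bG g (i0 g hg)))
  have hL : d1 g hg (piH g (bG g (i0 g hg)))
      = piH g (vB g hg (Sum.inr (i0 g hg))) := by
    rw [show bG g (i0 g hg) = of ℚ (Sum.inr (i0 g hg)) from rfl, d1_mk, D_of]
  rw [hL] at h
  have h2 := congrArg (psiQ g) h
  rw [psiQ_mk, psiQ_bracket] at h2
  have hb : psiQ g (piH g (bG g (i0 g hg))) = 0 := by
    rw [psiQ_mk, psiF_b]
  rw [hb, lie_zero] at h2
  have hv : psiF g (vB g hg (Sum.inr (i0 g hg)))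
      = ⁅Mf, ⁅Mh, Me⁆⁆ - ⁅Mh, ⁅Me, Mf⁆⁆ := by
    rw [vB_i0, lhom_sub]
    simp only [LieHom.map_lie, psiF_a0 g hg, psiF_a1 g hg, psiF_a2 g hg]
  rw [hv] at h2
  exact M1_ne h2

/-! ### `d₂` and the commutator -/

def wQ : LQ g := piH g ⁅bG g (i2 g hg), aG g (i1 g hg)⁆

def d2 : LQ g →ₗ[ℚ] LQ g :=
  d1 g hg + (LieAlgebra.ad ℚ (LQ g)) (wQ g hg)

lemma d2_apply (y : LQ g) : d2 g hg y = d1 g hg y + ⁅wQ g hg, y⁆ := rfl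

lemma d2_leibniz (x y : LQ g) :
    d2 g hg ⁅x, y⁆ = ⁅d2 g hg x, y⁆ + ⁅x, d2 g hg y⁆ := by
  simp only [d2_apply, d1_leibniz, leibniz_lie (wQ g hg) x y, add_lie, lie_add]
  abel

lemma d2_grade (n : ℕ) (v : LQ g) (hv : v ∈ lqDeg g n) :
    d2 g hg v ∈ lqDeg g (n + 2) := by
  obtain ⟨u, hu, rfl⟩ := (lqDeg_mem_iff g).mp hv
  rw [d2_apply]
  refine Submodule.add_mem _ (d1_grade g hg n _ (mem_lqDeg_of_mem g hu)) ?_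
  rw [wQ, ← LieHom.map_lie]
  have hw : ⁅bG g (i2 g hg), aG g (i1 g hg)⁆ ∈ flDeg g 2 :=
    flDeg_bracket g 1 1 _ (of_mem_flDeg_one g _) _ (of_mem_flDeg_one g _)
  have h := flDeg_bracket g 2 n _ hw u hu
  rw [show 2 + n = n + 2 from by omega] at h
  exact mem_lqDeg_of_mem g h

lemma d2_not_inner : ¬ ∃ z : LQ g, ∀ y : LQ g, d2 g hg y = ⁅z, y⁆ := by
  rintro ⟨z, hz⟩
  refine d1_not_inner g hg ⟨z - wQ g hg, fun y => ?_⟩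
  have h := hz y
  rw [d2_apply] at h
  rw [sub_lie]
  rw [← h]
  abel

/-- The degree-4 element `x` with `[d₁,d₂] = ad x`. -/
def xQ : LQ g := d1 g hg (wQ g hg)

lemma xQ_eq : xQ g hg = piH g ⁅vB g hg (Sum.inr (i2 g hg)), aG g (i1 g hg)⁆ := by
  rw [xQ, wQ, d1_mk, D_bracket]
  rw [show bG g (i2 g hg) = of ℚ (Sum.inr (i2 g hg)) from rfl, D_of]
  rw [show aG g (i1 g hg) = of ℚ (Sum.inl (i1 g hg)) from rfl, D_of]
  rw [vB_inl, show piH g (0 : FL g) = 0 from (piH g).toLinearMap.map_zero, lie_zero,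
    zero_add, ← LieHom.map_lie]

lemma xQ_mem : xQ g hg ∈ lqDeg g 4 := by
  rw [xQ_eq]
  have h := flDeg_bracket g 3 1 _ (vB_mem_flDeg_three g hg (Sum.inr (i2 g hg))) _
    (of_mem_flDeg_one g (Sum.inl (i1 g hg)))
  exact mem_lqDeg_of_mem g h

lemma xQ_ne : xQ g hg ≠ 0 := by
  intro h0
  have h := congrArg (psiQ g) h0
  rw [xQ_eq, psiQ_mk, LieHom.map_lie] at h
  rw [vB_i2] at h
  simp only [LieHom.map_lie, psiF_a0 g hg, psiF_a1 g hg] at h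
  rw [show psiF g (aG g (i1 g hg)) = Mf from psiF_a1 g hg] at h
  rw [map_zero] at h
  exact M2_ne h

lemma commutator_eq (y : LQ g) :
    d1 g hg (d2 g hg y) - d2 g hg (d1 g hg y) = ⁅xQ g hg, y⁆ := by
  simp only [d2_apply, map_add, d1_leibniz]
  rw [xQ]
  abel

end Stmt10

/-- **Statement 10.** Let `g ≥ 3` and let `𝔭̄ = 𝕃(H)/(θ)` be the quotient of the free
Lie algebra on `H = ℚ^{2g}` by the Lie ideal generated by `θ`, a graded `ℚ`-Lie algebra
with `H` in degree 1.  Then there exist derivations `d₁` and `d₂` of `𝔭̄` of degree 2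
(i.e., mapping the degree-`n` component into the degree-`(n+2)` component for every `n`),
neither of which is an inner derivation, such that the commutator
`[d₁,d₂] = d₁∘d₂ − d₂∘d₁` is a nonzero inner derivation; more precisely,
`[d₁,d₂] = ad(x)` for some nonzero element `x` in the degree-4 component of `𝔭̄`. -/
theorem exists_degree_two_outer_derivations_with_inner_bracket (g : ℕ) (hg : 3 ≤ g) :
    ∃ d₁ d₂ : LQ g →ₗ[ℚ] LQ g,
      (∀ x y : LQ g, d₁ ⁅x, y⁆ = ⁅d₁ x, y⁆ + ⁅x, d₁ y⁆) ∧
      (∀ x y : LQ g, d₂ ⁅x, y⁆ = ⁅d₂ x, y⁆ + ⁅x, d₂ y⁆) ∧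
      (∀ n : ℕ, ∀ v ∈ lqDeg g n, d₁ v ∈ lqDeg g (n + 2)) ∧
      (∀ n : ℕ, ∀ v ∈ lqDeg g n, d₂ v ∈ lqDeg g (n + 2)) ∧
      (¬ ∃ z : LQ g, ∀ y, d₁ y = ⁅z, y⁆) ∧
      (¬ ∃ z : LQ g, ∀ y, d₂ y = ⁅z, y⁆) ∧
      (∃ x : LQ g, x ∈ lqDeg g 4 ∧ x ≠ 0 ∧
        ∀ y : LQ g, d₁ (d₂ y) - d₂ (d₁ y) = ⁅x, y⁆) := by
  exact ⟨Stmt10.d1 g hg, Stmt10.d2 g hg, Stmt10.d1_leibniz g hg, Stmt10.d2_leibniz g hg,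
    fun n v hv => Stmt10.d1_grade g hg n v hv, fun n v hv => Stmt10.d2_grade g hg n v hv,
    Stmt10.d1_not_inner g hg, Stmt10.d2_not_inner g hg,
    ⟨Stmt10.xQ g hg, Stmt10.xQ_mem g hg, Stmt10.xQ_ne g hg, Stmt10.commutator_eq g hg⟩⟩
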